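/- arXiv:1306.0082 — 2 statements merged into one kernel-verified Lean document; each statement's English description precedes it below -/
import Mathlib

section
/- Let G : B_R → ℝ be concave with |G(y) − G(0) − ⟨y, ∇G(0)⟩| ≤ K·R² for all y ∈ B_R. Then ∇G(B_{R/2}) ⊆ B_{8K·(R/2)}(∇G(0)), i.e. |∇G(z) − ∇G(0)| ≤ 4KR for every z ∈ B_{R/2}. -/
open Metric Set
open scoped RealInnerProductSpace

noncomputable section

/-- Gradient inequality for concave functions: the graph lies below the tangent plane. -/
lemma concave_grad_ineq {E : Type*} [NormedAddCommGroup E] [InnerProductSpace ℝ E]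
    [CompleteSpace E] {s : Set E} {G : E → ℝ} (hG : ConcaveOn ℝ s G) {z y : E}
    (hz : z ∈ s) (hy : y ∈ s) (hd : DifferentiableAt ℝ G z) :
    G y - G z ≤ ⟪gradient G z, y - z⟫ := by
  set L : ℝ →ᵃ[ℝ] E := AffineMap.lineMap z y with hLdef
  have hL0 : L 0 = z := by simp [hLdef]
  have hL1 : L 1 = y := by simp [hLdef]
  -- concavity of G ∘ L on Icc 0 1
  have hsub : Icc (0:ℝ) 1 ⊆ L ⁻¹' s := by
    intro t ht
    have h1 : (1 - t) • z + t • y ∈ s := hG.1 hz hy (by linarith [ht.2]) ht.1 (by ring)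
    have h2 : L t = (1 - t) • z + t • y := by
      rw [hLdef, AffineMap.lineMap_apply_module]
    simpa [h2] using h1
  have hconc : ConcaveOn ℝ (Icc (0:ℝ) 1) (G ∘ L) :=
    (hG.comp_affineMap L).subset hsub (convex_Icc 0 1)
  -- derivative of G ∘ L at 0
  have hLder : HasDerivAt (fun t : ℝ => L t) (y - z) 0 := by
    have : HasDerivAt (fun t : ℝ => t • (y - z) + z) ((1:ℝ) • (y - z)) 0 :=
      ((hasDerivAt_id (0:ℝ)).smul_const (y - z)).add_const z
    have heq : (fun t : ℝ => L t) = fun t : ℝ => t • (y - z) + z := by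
      funext t; rw [hLdef, AffineMap.lineMap_apply_module]; module
    rw [heq]; simpa using this
  have hFD : HasFDerivAt G (InnerProductSpace.toDual ℝ E (gradient G z)) z :=
    hd.hasGradientAt
  have hFD' : HasFDerivAt G (InnerProductSpace.toDual ℝ E (gradient G z)) (L 0) := by
    rwa [hL0]
  have hg : HasDerivAt (G ∘ L) ⟪gradient G z, y - z⟫ 0 := by
    simpa [InnerProductSpace.toDual_apply_apply] using hFD'.comp_hasDerivAt 0 hLder
  -- slope inequality for the convex function -(G ∘ L)
  have hcvx : ConvexOn ℝ (Icc (0:ℝ) 1) (-(G ∘ L)) := hconc.neg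
  have hslope := hcvx.le_slope_of_hasDerivAt (x := 0) (y := 1)
    (left_mem_Icc.2 zero_le_one) (right_mem_Icc.2 zero_le_one) zero_lt_one hg.neg
  rw [slope_def_field] at hslope
  simp only [Pi.neg_apply, Function.comp_apply, hL0, hL1] at hslope
  have : -⟪gradient G z, y - z⟫ ≤ -(G y) - -(G z) := by
    calc -⟪gradient G z, y - z⟫ ≤ (-(G y) - -(G z)) / (1 - 0) := hslope
    _ = -(G y) - -(G z) := by norm_num
  linarith

theorem stmt_2 {n : ℕ} (R K : ℝ) (hR : 0 < R) (hK : 0 < K)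
    (G : EuclideanSpace ℝ (Fin n) → ℝ)
    (hG : ConcaveOn ℝ (ball (0 : EuclideanSpace ℝ (Fin n)) R) G)
    (hdiff : ∀ y ∈ ball (0 : EuclideanSpace ℝ (Fin n)) (R / 2), DifferentiableAt ℝ G y)
    (hd0 : DifferentiableAt ℝ G 0)
    (hKR : ∀ y ∈ ball (0 : EuclideanSpace ℝ (Fin n)) R,
      |G y - G 0 - ⟪y, gradient G 0⟫| ≤ K * R ^ 2) :
    ∀ z ∈ ball (0 : EuclideanSpace ℝ (Fin n)) (R / 2),
      ‖gradient G z - gradient G 0‖ ≤ 4 * K * R := by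
  intro z hz
  set v := gradient G z - gradient G 0 with hvdef
  by_cases hv : v = 0
  · rw [hv, norm_zero]; positivity
  · have hvpos : 0 < ‖v‖ := norm_pos_iff.2 hv
    set y := z - ((R / 2) / ‖v‖) • v with hydef
    have hzR : z ∈ ball (0 : EuclideanSpace ℝ (Fin n)) R := by
      rw [mem_ball_zero_iff] at hz ⊢; linarith [hz]
    have hyR : y ∈ ball (0 : EuclideanSpace ℝ (Fin n)) R := by
      rw [mem_ball_zero_iff] at hz ⊢
      calc ‖y‖ ≤ ‖z‖ + ‖((R / 2) / ‖v‖) • v‖ := norm_sub_le _ _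
        _ = ‖z‖ + R / 2 := by
            rw [norm_smul, Real.norm_eq_abs, abs_of_pos (by positivity),
              div_mul_cancel₀ _ (ne_of_gt hvpos)]
        _ < R := by linarith
    -- gradient inequality at z
    have hineq := concave_grad_ineq hG hzR hyR (hdiff z hz)
    have hyz : y - z = -(((R / 2) / ‖v‖) • v) := by rw [hydef]; abel
    have hinner : ⟪gradient G z, y - z⟫ - ⟪gradient G 0, y - z⟫ = -(R / 2) * ‖v‖ := by
      rw [← inner_sub_left, ← hvdef, hyz, inner_neg_right, real_inner_smul_right,
        real_inner_self_eq_norm_sq]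
      field_simp
    have hHy := hKR y hyR
    have hHz := hKR z hzR
    rw [abs_le] at hHy hHz
    have hyzi : ⟪y, gradient G 0⟫ - ⟪z, gradient G 0⟫ = ⟪gradient G 0, y - z⟫ := by
      rw [← inner_sub_left, real_inner_comm]
    -- H y - H z ≤ ⟪v, y - z⟫ = -(R/2)‖v‖, and H y - H z ≥ -2KR²
    have key : -(2 * (K * R ^ 2)) ≤ -(R / 2) * ‖v‖ := by
      have h1 : (G y - G 0 - ⟪y, gradient G 0⟫) - (G z - G 0 - ⟪z, gradient G 0⟫)
          ≤ -(R / 2) * ‖v‖ := by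
        rw [← hinner]
        have : (G y - G 0 - ⟪y, gradient G 0⟫) - (G z - G 0 - ⟪z, gradient G 0⟫)
            = (G y - G z) - ⟪gradient G 0, y - z⟫ := by rw [← hyzi]; ring
        rw [this]
        linarith [hineq]
      linarith [hHy.1, hHz.2]
    have : (R / 2) * ‖v‖ ≤ 2 * (K * R ^ 2) := by linarith
    have hRpos : 0 < R / 2 := by linarith
    calc ‖v‖ = ((R / 2) * ‖v‖) / (R / 2) := by field_simp
      _ ≤ (2 * (K * R ^ 2)) / (R / 2) := by gcongr
      _ = 4 * K * R := by field_simp; ring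
end
end

section
/- Let Γ be the concave envelope of u⁺ in B_3 (with Γ = 0 outside B_3) of an upper semicontinuous u with u ≤ 0 on ℝⁿ∖B_1 and u⁺ ≢ 0. Then every superdifferential of Γ attained at a point of B_1 is also attained at a contact point: ∇Γ(B_1) = ∇Γ(B_1 ∩ {u = Γ}), where ∇Γ(E) denotes the union of the superdifferentials of Γ over points of E. -/
open Metric Set MeasureTheory
open scoped RealInnerProductSpace Classical

noncomputable section

lemma usc_exists_max {α : Type*} [TopologicalSpace α] {f : α → ℝ}
    (hf : UpperSemicontinuous f) {K : Set α} (hK : IsCompact K) (hKc : IsClosed K)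
    (hne : K.Nonempty) : ∃ x ∈ K, ∀ y ∈ K, f y ≤ f x := by
  haveI : Nonempty K := hne.to_subtype
  set C : K → Set α := fun y => K ∩ {x | f y.1 ≤ f x} with hC
  have hcl : ∀ y : K, IsClosed (C y) := fun y =>
    hKc.inter (hf.isClosed_preimage (f y.1))
  have hcpt : ∀ y : K, IsCompact (C y) := fun y =>
    hK.inter_right (hf.isClosed_preimage (f y.1))
  have hn : ∀ y : K, (C y).Nonempty := fun y => ⟨y.1, y.2, le_refl (f y.1)⟩
  have hdir : Directed (· ⊇ ·) C := by
    intro a b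
    rcases le_total (f a.1) (f b.1) with h | h
    · exact ⟨b, fun x hx => ⟨hx.1, h.trans hx.2⟩, fun x hx => hx⟩
    · exact ⟨a, fun x hx => hx, fun x hx => ⟨hx.1, h.trans hx.2⟩⟩
  obtain ⟨x, hx⟩ := IsCompact.nonempty_iInter_of_directed_nonempty_isCompact_isClosed
    C hdir hn hcpt hcl
  simp only [mem_iInter] at hx
  obtain ⟨y0⟩ := (inferInstance : Nonempty K)
  exact ⟨x, (hx y0).1, fun y hy => (hx ⟨y, hy⟩).2⟩

/-- The concave envelope of `u⁺` in `B_3`: the infimum over affine functions lying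
above `u⁺ = max u 0` on `B_3`, set to `0` outside `B_3`. -/
def concEnv {n : ℕ} (u : EuclideanSpace ℝ (Fin n) → ℝ) (x : EuclideanSpace ℝ (Fin n)) : ℝ :=
  if x ∈ ball (0 : EuclideanSpace ℝ (Fin n)) 3 then
    sInf {v | ∃ (ξ : EuclideanSpace ℝ (Fin n)) (a : ℝ),
      (∀ y ∈ ball (0 : EuclideanSpace ℝ (Fin n)) 3, max (u y) 0 ≤ ⟪ξ, y⟫ + a) ∧
      v = ⟪ξ, x⟫ + a}
  else 0

/-- The set of superdifferentials (in `B_3`) of `Γ` attained at points of `E`: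
`∇Γ(E) = {ξ : ∃ x ∈ E, Γ(y) ≤ Γ(x) + ⟨ξ, y - x⟩ for all y ∈ B_3}`. -/
def gradSet {n : ℕ} (Γ : EuclideanSpace ℝ (Fin n) → ℝ) (E : Set (EuclideanSpace ℝ (Fin n))) :
    Set (EuclideanSpace ℝ (Fin n)) :=
  {ξ | ∃ x ∈ E, ∀ y ∈ ball (0 : EuclideanSpace ℝ (Fin n)) 3, Γ y ≤ Γ x + ⟪ξ, y - x⟫}

theorem stmt_19 {n : ℕ} (u : EuclideanSpace ℝ (Fin n) → ℝ)
    (husc : UpperSemicontinuous u)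
    (hu : ∀ y ∉ ball (0 : EuclideanSpace ℝ (Fin n)) 1, u y ≤ 0)
    (hnontriv : ∃ x, max (u x) 0 ≠ 0) :
    gradSet (concEnv u) (ball (0 : EuclideanSpace ℝ (Fin n)) 1)
      = gradSet (concEnv u)
          (ball (0 : EuclideanSpace ℝ (Fin n)) 1 ∩ {x | u x = concEnv u x}) := by
  have hB13 : ball (0 : EuclideanSpace ℝ (Fin n)) 1 ⊆ ball (0 : EuclideanSpace ℝ (Fin n)) 3 :=
    ball_subset_ball (by norm_num)
  have hcB13 : closedBall (0 : EuclideanSpace ℝ (Fin n)) 1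
      ⊆ ball (0 : EuclideanSpace ℝ (Fin n)) 3 := closedBall_subset_ball (by norm_num)
  set S : EuclideanSpace ℝ (Fin n) → Set ℝ := fun x => {v | ∃ (ξ : EuclideanSpace ℝ (Fin n))
      (a : ℝ), (∀ y ∈ ball (0 : EuclideanSpace ℝ (Fin n)) 3, max (u y) 0 ≤ ⟪ξ, y⟫ + a) ∧
      v = ⟪ξ, x⟫ + a} with hS
  have hΓdef : ∀ x ∈ ball (0 : EuclideanSpace ℝ (Fin n)) 3, concEnv u x = sInf (S x) := by
    intro x hx
    rw [concEnv, if_pos hx]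
  -- usc of u⁺
  have huscp : UpperSemicontinuous (fun y => max (u y) 0) := by
    intro x c hc
    have hc0 : (0 : ℝ) < c := lt_of_le_of_lt (le_max_right _ _) hc
    have hcu : u x < c := lt_of_le_of_lt (le_max_left _ _) hc
    filter_upwards [husc x c hcu] with y hy
    exact max_lt hy hc0
  -- global bound on u⁺
  obtain ⟨x₁, hx₁K, hx₁max⟩ := usc_exists_max husc
    (isCompact_closedBall (0 : EuclideanSpace ℝ (Fin n)) 1)
    isClosed_closedBall (nonempty_closedBall.2 (by norm_num))
  have hMb : ∀ y : EuclideanSpace ℝ (Fin n), max (u y) 0 ≤ max (u x₁) 0 := by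
    intro y
    by_cases hy : y ∈ closedBall (0 : EuclideanSpace ℝ (Fin n)) 1
    · exact max_le_max (hx₁max y hy) le_rfl
    · have : u y ≤ 0 := hu y (fun h => hy (ball_subset_closedBall h))
      simp [max_eq_right this, le_max_right]
  -- S x is nonempty
  have hSne : ∀ x : EuclideanSpace ℝ (Fin n), (S x).Nonempty := by
    intro x
    refine ⟨max (u x₁) 0, 0, max (u x₁) 0, fun y _ => ?_, by simp⟩
    simpa using hMb y
  -- elements of S x dominate u⁺ at x, for x ∈ B3
  have hSlb : ∀ x ∈ ball (0 : EuclideanSpace ℝ (Fin n)) 3, ∀ v ∈ S x, max (u x) 0 ≤ v := by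
    rintro x hx v ⟨ξ, a, hmaj, rfl⟩
    exact hmaj x hx
  have hSbdd : ∀ x ∈ ball (0 : EuclideanSpace ℝ (Fin n)) 3, BddBelow (S x) :=
    fun x hx => ⟨max (u x) 0, fun v hv => hSlb x hx v hv⟩
  have hΓge : ∀ x ∈ ball (0 : EuclideanSpace ℝ (Fin n)) 3, max (u x) 0 ≤ concEnv u x := by
    intro x hx
    rw [hΓdef x hx]
    exact le_csInf (hSne x) (hSlb x hx)
  have hΓnn : ∀ x ∈ ball (0 : EuclideanSpace ℝ (Fin n)) 3, 0 ≤ concEnv u x :=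
    fun x hx => le_trans (le_max_right _ _) (hΓge x hx)
  have hΓle : ∀ (ξ : EuclideanSpace ℝ (Fin n)) (a : ℝ),
      (∀ y ∈ ball (0 : EuclideanSpace ℝ (Fin n)) 3, max (u y) 0 ≤ ⟪ξ, y⟫ + a) →
      ∀ x ∈ ball (0 : EuclideanSpace ℝ (Fin n)) 3, concEnv u x ≤ ⟪ξ, x⟫ + a := by
    intro ξ a hmaj x hx
    rw [hΓdef x hx]
    exact csInf_le (hSbdd x hx) ⟨ξ, a, hmaj, rfl⟩
  -- the nontrivial point
  obtain ⟨x₀, hx₀⟩ := hnontriv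
  have hc0 : 0 < max (u x₀) 0 := lt_of_le_of_ne (le_max_right _ _) (Ne.symm hx₀)
  have hx₀1 : x₀ ∈ ball (0 : EuclideanSpace ℝ (Fin n)) 1 := by
    by_contra h
    have := hu x₀ h
    simp [max_eq_right this] at hc0
  have hx₀3 : x₀ ∈ ball (0 : EuclideanSpace ℝ (Fin n)) 3 := hB13 hx₀1
  -- positivity of Γ on B3
  have hΓpos : ∀ x ∈ ball (0 : EuclideanSpace ℝ (Fin n)) 3, 0 < concEnv u x := by
    intro x hx
    have hxn : ‖x‖ < 3 := by rwa [mem_ball_zero_iff] at hx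
    set s : ℝ := (3 - ‖x‖) / (2 * (‖x‖ + ‖x₀‖ + 1)) with hs
    have hden : 0 < 2 * (‖x‖ + ‖x₀‖ + 1) := by positivity
    have hspos : 0 < s := div_pos (by linarith) hden
    set z : EuclideanSpace ℝ (Fin n) := x + s • (x - x₀) with hz
    have hzball : z ∈ ball (0 : EuclideanSpace ℝ (Fin n)) 3 := by
      rw [mem_ball_zero_iff]
      have h1 : ‖z‖ ≤ ‖x‖ + s * ‖x - x₀‖ := by
        calc ‖z‖ ≤ ‖x‖ + ‖s • (x - x₀)‖ := norm_add_le _ _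
        _ = ‖x‖ + s * ‖x - x₀‖ := by rw [norm_smul, Real.norm_eq_abs, abs_of_pos hspos]
      have h2 : ‖x - x₀‖ ≤ ‖x‖ + ‖x₀‖ := norm_sub_le _ _
      have h3 : s * ‖x - x₀‖ ≤ s * (‖x‖ + ‖x₀‖) :=
        mul_le_mul_of_nonneg_left h2 hspos.le
      have h4 : s * (‖x‖ + ‖x₀‖) < 3 - ‖x‖ := by
        rw [hs, div_mul_eq_mul_div, div_lt_iff₀ hden]
        nlinarith [norm_nonneg x, norm_nonneg x₀]
      linarith
    have hkey : ∀ v ∈ S x, s * max (u x₀) 0 / (1 + s) ≤ v := by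
      rintro v ⟨ξ, a, hmaj, rfl⟩
      have h1s : (0 : ℝ) < 1 + s := by linarith
      have hz' : ⟪ξ, z⟫ = ⟪ξ, x⟫ + s * (⟪ξ, x⟫ - ⟪ξ, x₀⟫) := by
        rw [hz, inner_add_right, real_inner_smul_right, inner_sub_right]
      have hA : max (u x₀) 0 ≤ ⟪ξ, x₀⟫ + a := hmaj x₀ hx₀3
      have hB : (0 : ℝ) ≤ ⟪ξ, z⟫ + a := le_trans (le_max_right _ _) (hmaj z hzball)
      rw [hz'] at hB
      rw [div_le_iff₀ h1s]
      nlinarith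
    have hge : s * max (u x₀) 0 / (1 + s) ≤ concEnv u x := by
      rw [hΓdef x hx]
      exact le_csInf (hSne x) hkey
    have hpos : 0 < s * max (u x₀) 0 / (1 + s) := by positivity
    linarith
  -- main argument
  ext ξ
  constructor
  · rintro ⟨x, hx, hsub⟩
    have hx3 : x ∈ ball (0 : EuclideanSpace ℝ (Fin n)) 3 := hB13 hx
    obtain ⟨a, ha⟩ : ∃ a : ℝ, a = concEnv u x - ⟪ξ, x⟫ := ⟨_, rfl⟩
    have hL : ∀ y ∈ ball (0 : EuclideanSpace ℝ (Fin n)) 3, concEnv u y ≤ ⟪ξ, y⟫ + a := by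
      intro y hy
      have h1 := hsub y hy
      rw [inner_sub_right] at h1
      linarith
    have hLx : ⟪ξ, x⟫ + a = concEnv u x := by rw [ha]; ring
    -- usc of the difference
    have hcontL : Continuous fun y : EuclideanSpace ℝ (Fin n) => ⟪ξ, y⟫ + a :=
      (continuous_const.inner continuous_id).add continuous_const
    have huscg : UpperSemicontinuous fun y : EuclideanSpace ℝ (Fin n) =>
        max (u y) 0 - (⟪ξ, y⟫ + a) := by
      have h1 := huscp.add hcontL.neg.upperSemicontinuous
      simpa [sub_eq_add_neg] using h1
    obtain ⟨x', hx'K, hx'max⟩ := usc_exists_max huscg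
      (isCompact_closedBall (0 : EuclideanSpace ℝ (Fin n)) 1)
      isClosed_closedBall (nonempty_closedBall.2 (by norm_num))
    have hx'3 : x' ∈ ball (0 : EuclideanSpace ℝ (Fin n)) 3 := hcB13 hx'K
    have hgle : max (u x') 0 - (⟪ξ, x'⟫ + a) ≤ 0 := by
      have h1 : max (u x') 0 ≤ concEnv u x' := hΓge x' hx'3
      have h2 : concEnv u x' ≤ ⟪ξ, x'⟫ + a := hL x' hx'3
      linarith
    have hgx' : max (u x') 0 - (⟪ξ, x'⟫ + a) = 0 := by
      rcases eq_or_lt_of_le hgle with h | h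
      · exact h
      exfalso
      obtain ⟨ε, hε⟩ : ∃ ε : ℝ, ε = -(max (u x') 0 - (⟪ξ, x'⟫ + a)) := ⟨_, rfl⟩
      have hεpos : 0 < ε := by rw [hε]; linarith
      obtain ⟨M', hM'⟩ : ∃ M' : ℝ, M' = ‖ξ‖ + |a| + 1 := ⟨_, rfl⟩
      have hM'0 : (1 : ℝ) ≤ M' := by rw [hM']; have h1 := norm_nonneg ξ; have h2 := abs_nonneg a; linarith
      obtain ⟨δ, hδ⟩ : ∃ δ : ℝ, δ = ε / (M' + ε) := ⟨_, rfl⟩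
      have hMε : (0 : ℝ) < M' + ε := by linarith
      have hδpos : 0 < δ := hδ ▸ div_pos hεpos hMε
      have hδlt : δ < 1 := by
        rw [hδ, div_lt_one hMε]; linarith
      have hδM : δ * M' ≤ ε := by
        rw [hδ, div_mul_eq_mul_div, div_le_iff₀ hMε]
        nlinarith
      -- (1-δ) L is an affine majorant of u⁺ on B3
      have hmaj : ∀ y ∈ ball (0 : EuclideanSpace ℝ (Fin n)) 3,
          max (u y) 0 ≤ ⟪(1 - δ) • ξ, y⟫ + (1 - δ) * a := by
        intro y hy
        have hrw : ⟪(1 - δ) • ξ, y⟫ + (1 - δ) * a = (1 - δ) * (⟪ξ, y⟫ + a) := by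
          rw [real_inner_smul_left]; ring
        rw [hrw]
        by_cases hy1 : ‖y‖ < 1
        · have hyK : y ∈ closedBall (0 : EuclideanSpace ℝ (Fin n)) 1 := by
            rw [mem_closedBall_zero_iff]; linarith
          have h1 := hx'max y hyK
          have h2 : max (u y) 0 ≤ (⟪ξ, y⟫ + a) - ε := by rw [hε]; linarith
          have h3 : |⟪ξ, y⟫ + a| ≤ M' := by
            have hay := abs_add_le ⟪ξ, y⟫ a
            have hin := abs_real_inner_le_norm ξ y
            have hnξ := norm_nonneg ξ
            rw [hM']
            nlinarith
          have h4 : δ * (⟪ξ, y⟫ + a) ≤ ε := by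
            have h5 : δ * (⟪ξ, y⟫ + a) ≤ δ * M' :=
              mul_le_mul_of_nonneg_left (abs_le.1 h3).2 hδpos.le
            linarith
          nlinarith
        · have hyn : y ∉ ball (0 : EuclideanSpace ℝ (Fin n)) 1 := by
            rw [mem_ball_zero_iff]; exact hy1
          have h1 : u y ≤ 0 := hu y hyn
          have h2 : (0 : ℝ) ≤ ⟪ξ, y⟫ + a := le_trans (hΓnn y hy) (hL y hy)
          rw [max_eq_right h1]
          exact mul_nonneg (by linarith) h2
      have hcon : concEnv u x ≤ (1 - δ) * concEnv u x := by
        have h1 := hΓle _ _ hmaj x hx3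
        have hrw : ⟪(1 - δ) • ξ, x⟫ + (1 - δ) * a = (1 - δ) * (⟪ξ, x⟫ + a) := by
          rw [real_inner_smul_left]; ring
        rw [hrw, hLx] at h1
        exact h1
      have := hΓpos x hx3
      nlinarith
    -- x' is the contact point
    have heq : max (u x') 0 = ⟪ξ, x'⟫ + a := by linarith
    have hΓx' : concEnv u x' = ⟪ξ, x'⟫ + a :=
      le_antisymm (hL x' hx'3) (heq ▸ hΓge x' hx'3)
    have hposx' : 0 < max (u x') 0 := by rw [heq, ← hΓx']; exact hΓpos x' hx'3
    have hux'pos : 0 < u x' := by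
      by_contra h
      push_neg at h
      rw [max_eq_right h] at hposx'
      exact lt_irrefl _ hposx'
    have hx'1 : x' ∈ ball (0 : EuclideanSpace ℝ (Fin n)) 1 := by
      by_contra h
      exact absurd (hu x' h) (not_le.2 hux'pos)
    have hux' : u x' = concEnv u x' := by
      rw [hΓx', ← heq, max_eq_left hux'pos.le]
    refine ⟨x', ⟨hx'1, hux'⟩, fun y hy => ?_⟩
    have h1 : concEnv u y ≤ ⟪ξ, y⟫ + a := hL y hy
    rw [inner_sub_right, hΓx']
    linarith
  · rintro ⟨x, ⟨hx1, _⟩, h⟩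
    exact ⟨x, hx1, h⟩
end
end
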